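/- arXiv:2503.18974 — 5 statements merged into one kernel-verified Lean document; each statement's English description precedes it below -/
import Mathlib

section
/- With freq defined as the count of consecutive ones ending at row i in each column, a square of side k with bottom-right corner at (i, j) consists entirely of ones if and only if k ≤ j+1 and freq_i(j - t) ≥ k for all t = 0, ..., k-1. -/
/-! The admissible run lengths form an initial segment of `ℕ`, so `k ≤ freq i j'` says exactly
that column `j'` has at least `k` ones ending at row `i`. The rest is a reshuffling of
quantifiers, with `k ≤ i + 1` read off any single column when `k > 0`. -/

theorem IsGreatest.le_iff_mem_of_isLowerSet {α : Type*} [Preorder α] {s : Set α} {a b : α}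
    (hs : IsLowerSet s) (h : IsGreatest s a) : b ≤ a ↔ b ∈ s :=
  ⟨fun hb => hs hb h.1, fun hb => h.2 hb⟩

theorem isLowerSet_setOf_le_and_forall_lt (N : ℕ) (P : ℕ → Prop) :
    IsLowerSet {l : ℕ | l ≤ N ∧ ∀ t < l, P t} :=
  fun _ _ hba ⟨haN, ha⟩ => ⟨hba.trans haN, fun t ht => ha t (ht.trans_le hba)⟩

theorem stmt1 {m n : ℕ} (M : Fin m → Fin n → Bool) (freq : Fin m → Fin n → ℕ)
    (hfreq : ∀ (i : Fin m) (j : Fin n),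
      IsGreatest {l : ℕ | l ≤ i.val + 1 ∧
        ∀ t < l, M ⟨i.val - t, Nat.lt_of_le_of_lt (Nat.sub_le _ _) i.isLt⟩ j = true}
        (freq i j))
    (i : Fin m) (j : Fin n) (k : ℕ) :
    (k ≤ i.val + 1 ∧ k ≤ j.val + 1 ∧
      ∀ s < k, ∀ t < k,
        M ⟨i.val - s, Nat.lt_of_le_of_lt (Nat.sub_le _ _) i.isLt⟩
          ⟨j.val - t, Nat.lt_of_le_of_lt (Nat.sub_le _ _) j.isLt⟩ = true)
    ↔ (k ≤ j.val + 1 ∧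
        ∀ t < k, k ≤ freq i ⟨j.val - t, Nat.lt_of_le_of_lt (Nat.sub_le _ _) j.isLt⟩) := by
  have le_freq_iff : ∀ j' : Fin n, k ≤ freq i j' ↔
      k ≤ i.val + 1 ∧
        ∀ s < k, M ⟨i.val - s, Nat.lt_of_le_of_lt (Nat.sub_le _ _) i.isLt⟩ j' = true :=
    fun j' => (hfreq i j').le_iff_mem_of_isLowerSet (isLowerSet_setOf_le_and_forall_lt _ _)
  simp only [le_freq_iff]
  constructor
  · rintro ⟨hi, hj, hsq⟩
    exact ⟨hj, fun t ht => ⟨hi, fun s hs => hsq s hs t ht⟩⟩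
  · rintro ⟨hj, hcols⟩
    rcases Nat.eq_zero_or_pos k with rfl | hk
    · simp
    · exact ⟨(hcols 0 hk).1, hj, fun s hs t ht => (hcols t ht).2 s hs⟩
end

section
/- With counter defined as above for threshold h = w, counter(j) ≥ w holds for some j if and only if there exists a contiguous run of w columns ending at some column j' ≤ j with freq_i values all at least w; combined with the frequency characterization, counter(j) = w at row i with threshold w implies the existence of an all-ones w × w square submatrix with bottom-right corner (i, j). -/
/-!
The counter is a run-length counter: `k ≤ counter j` holds exactly when there are `k` columns
ending at `j` and all of them have frequency at least `w`. If `counter j = w`, each of the `w`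
columns ending at `j` has at least `w` consecutive ones ending at row `i`, and together these
form an all-ones `w × w` square with bottom-right corner `(i, j)`.
-/

namespace Fin

def truncSub {n : ℕ} (j : Fin n) (t : ℕ) : Fin n :=
  ⟨j.val - t, Nat.lt_of_le_of_lt (Nat.sub_le _ _) j.isLt⟩

@[simp]
lemma val_truncSub {n : ℕ} (j : Fin n) (t : ℕ) : (j.truncSub t).val = j.val - t := rfl

@[simp]
lemma truncSub_zero {n : ℕ} (j : Fin n) : j.truncSub 0 = j := rfl

lemma truncSub_truncSub {n : ℕ} (j : Fin n) (s t : ℕ) :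
    (j.truncSub s).truncSub t = j.truncSub (s + t) :=
  Fin.ext (Nat.sub_sub _ _ _)

end Fin

section RunLength

variable {n : ℕ} {P : Fin n → Prop} [DecidablePred P] {c : Fin n → ℕ}

lemma le_runCounter_iff
    (hc : ∀ j, c j = if P j then (if j.val = 0 then 1 else c (j.truncSub 1) + 1) else 0)
    (k : ℕ) (j : Fin n) :
    k ≤ c j ↔ k ≤ j.val + 1 ∧ ∀ t < k, P (j.truncSub t) := by
  induction k generalizing j with
  | zero => simp
  | succ k ih =>
    rw [Nat.forall_lt_succ_left, Fin.truncSub_zero, hc j]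
    by_cases hPj : P j
    · by_cases hj : j.val = 0
      · have hj' : ∀ t, j.truncSub t = j := fun t => Fin.ext (by simp [hj])
        simp [hPj, hj, hj']
      · simp only [hPj, hj, if_true, if_false, true_and, Nat.add_le_add_iff_right, ih,
          Fin.truncSub_truncSub, Fin.val_truncSub, Nat.add_comm 1, Nat.sub_one_add_one hj]
    · simp [hPj]

end RunLength

lemma allOnes_square_of_le_freq {m n : ℕ} {M : Fin m → Fin n → Bool} {i : Fin m}
    {freq : Fin n → ℕ}
    (hfreq : ∀ j, freq j ≤ i.val + 1 ∧ ∀ s < freq j, M (i.truncSub s) j = true)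
    {w : ℕ} {j : Fin n} (hwj : w ≤ j.val + 1) (hw : ∀ t < w, w ≤ freq (j.truncSub t)) :
    w ≤ i.val + 1 ∧ w ≤ j.val + 1 ∧
      ∀ s < w, ∀ t < w, M (i.truncSub s) (j.truncSub t) = true := by
  refine ⟨?_, hwj, fun s hs t ht => (hfreq _).2 s (by have := hw t ht; omega)⟩
  rcases Nat.eq_zero_or_pos w with rfl | hwpos
  · omega
  · exact (hw 0 hwpos).trans (hfreq _).1

theorem stmt3 {m n : ℕ} (M : Fin m → Fin n → Bool) (i : Fin m)
    (freq : Fin n → ℕ)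
    (hfreq : ∀ j : Fin n,
      IsGreatest {l : ℕ | l ≤ i.val + 1 ∧
        ∀ t < l, M ⟨i.val - t, Nat.lt_of_le_of_lt (Nat.sub_le _ _) i.isLt⟩ j = true}
        (freq j))
    (w : ℕ) (counter : Fin n → ℕ)
    (hcounter : ∀ j : Fin n,
      counter j =
        if w ≤ freq j then
          (if j.val = 0 then 1
           else counter ⟨j.val - 1, Nat.lt_of_le_of_lt (Nat.sub_le _ _) j.isLt⟩ + 1)
        else 0) :
    ((∃ j : Fin n, w ≤ counter j) ↔
      (∃ j' : Fin n, w ≤ j'.val + 1 ∧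
        ∀ t < w, w ≤ freq ⟨j'.val - t, Nat.lt_of_le_of_lt (Nat.sub_le _ _) j'.isLt⟩)) ∧
    (∀ j : Fin n, counter j = w →
      w ≤ i.val + 1 ∧ w ≤ j.val + 1 ∧
        ∀ s < w, ∀ t < w,
          M ⟨i.val - s, Nat.lt_of_le_of_lt (Nat.sub_le _ _) i.isLt⟩
            ⟨j.val - t, Nat.lt_of_le_of_lt (Nat.sub_le _ _) j.isLt⟩ = true) := by
  have hrun := le_runCounter_iff hcounter w
  refine ⟨exists_congr hrun, fun j hj => ?_⟩
  obtain ⟨hwj, hw⟩ := (hrun j).mp hj.ge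
  exact allOnes_square_of_le_freq (fun j => (hfreq j).1) hwj hw
end

section
/- For any cell (i,j) with i ≥ 1 and j ≥ 1 and M(i,j) = 1, the side length L(i,j) of the largest all-ones square with bottom-right corner (i,j) satisfies L(i,j) = min(L(i-1,j), L(i,j-1), L(i-1,j-1)) + 1. -/
/-! The three `k × k` squares ending at `(i-1, j)`, `(i, j-1)` and `(i-1, j-1)` together with the
cell `(i, j)` cover exactly the `(k+1) × (k+1)` square ending at `(i, j)`. Hence a square of side
`k + 1` ends at `(i, j)` iff `(i, j)` is set and squares of side `k` end at the three neighbours;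
since squares ending at a fixed cell are closed under shrinking, the largest sides satisfy the
`min + 1` recurrence. -/

/-- The bounds `k ≤ i + 1`, `k ≤ j + 1` keep the subtractions `i - s`, `j - t` from truncating. -/
def AllOnesSquare (P : ℕ → ℕ → Prop) (i j k : ℕ) : Prop :=
  k ≤ i + 1 ∧ k ≤ j + 1 ∧ ∀ s < k, ∀ t < k, P (i - s) (j - t)

namespace AllOnesSquare

variable {P : ℕ → ℕ → Prop} {i j k : ℕ}

theorem mono {k' : ℕ} (h : AllOnesSquare P i j k) (hk : k' ≤ k) : AllOnesSquare P i j k' :=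
  ⟨by have := h.1; omega, by have := h.2.1; omega,
    fun s hs t ht => h.2.2 s (by omega) t (by omega)⟩

theorem succ_iff (hi : 1 ≤ i) (hj : 1 ≤ j) :
    AllOnesSquare P i j (k + 1) ↔
      P i j ∧ AllOnesSquare P (i - 1) j k ∧ AllOnesSquare P i (j - 1) k ∧
        AllOnesSquare P (i - 1) (j - 1) k := by
  constructor
  · rintro ⟨hki, hkj, hP⟩
    refine ⟨by simpa using hP 0 (by omega) 0 (by omega), ⟨by omega, by omega, ?_⟩,
      ⟨by omega, by omega, ?_⟩, ⟨by omega, by omega, ?_⟩⟩ <;> intro s hs t ht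
    · simpa only [Nat.sub_sub, Nat.add_comm 1] using hP (s + 1) (by omega) t (by omega)
    · simpa only [Nat.sub_sub, Nat.add_comm 1] using hP s (by omega) (t + 1) (by omega)
    · simpa only [Nat.sub_sub, Nat.add_comm 1] using hP (s + 1) (by omega) (t + 1) (by omega)
  · rintro ⟨hPij, ⟨hki, -, hB⟩, ⟨-, hkj, hC⟩, -, -, hD⟩
    refine ⟨by omega, by omega, ?_⟩
    rintro (_ | s) hs (_ | t) ht
    · exact hPij
    · simpa only [Nat.sub_sub, Nat.add_comm 1] using hC 0 (by omega) t (by omega)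
    · simpa only [Nat.sub_sub, Nat.add_comm 1] using hB s (by omega) 0 (by omega)
    · simpa only [Nat.sub_sub, Nat.add_comm 1] using hD s (by omega) t (by omega)

end AllOnesSquare

theorem isGreatest_allOnesSquare_recurrence {P : ℕ → ℕ → Prop} {i j A B C D : ℕ}
    (hA : IsGreatest {k | AllOnesSquare P i j k} A)
    (hB : IsGreatest {k | AllOnesSquare P (i - 1) j k} B)
    (hC : IsGreatest {k | AllOnesSquare P i (j - 1) k} C)
    (hD : IsGreatest {k | AllOnesSquare P (i - 1) (j - 1) k} D)
    (hi : 1 ≤ i) (hj : 1 ≤ j) (hP : P i j) :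
    A = min (min B C) D + 1 := by
  apply le_antisymm
  · cases A with
    | zero => omega
    | succ k =>
      obtain ⟨-, hkB, hkC, hkD⟩ := (AllOnesSquare.succ_iff hi hj).1 hA.1
      have := hB.2 hkB
      have := hC.2 hkC
      have := hD.2 hkD
      omega
  · exact hA.2 <| (AllOnesSquare.succ_iff hi hj).2
      ⟨hP, hB.1.mono (by omega), hC.1.mono (by omega), hD.1.mono (by omega)⟩

/-- `M` read as a predicate on `ℕ × ℕ`, false outside the grid. -/
def gridCell {m n : ℕ} (M : Fin m → Fin n → Bool) (a b : ℕ) : Prop :=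
  ∃ (ha : a < m) (hb : b < n), M ⟨a, ha⟩ ⟨b, hb⟩ = true

theorem setOf_allOnesSquare_gridCell {m n : ℕ} (M : Fin m → Fin n → Bool) (i : Fin m) (j : Fin n) :
    {k : ℕ | AllOnesSquare (gridCell M) i j k} =
      {k : ℕ | k ≤ i.val + 1 ∧ k ≤ j.val + 1 ∧
        ∀ s < k, ∀ t < k,
          M ⟨i.val - s, Nat.lt_of_le_of_lt (Nat.sub_le _ _) i.isLt⟩
            ⟨j.val - t, Nat.lt_of_le_of_lt (Nat.sub_le _ _) j.isLt⟩ = true} := by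
  ext k
  refine and_congr_right fun _ => and_congr_right fun _ => forall₂_congr fun s _ =>
    forall₂_congr fun t _ => ?_
  exact ⟨fun ⟨_, _, h⟩ => h, fun h => ⟨_, _, h⟩⟩

theorem stmt7 {m n : ℕ} (M : Fin m → Fin n → Bool) (L : Fin m → Fin n → ℕ)
    (hL : ∀ (i : Fin m) (j : Fin n),
      IsGreatest {k : ℕ | k ≤ i.val + 1 ∧ k ≤ j.val + 1 ∧
        ∀ s < k, ∀ t < k,
          M ⟨i.val - s, Nat.lt_of_le_of_lt (Nat.sub_le _ _) i.isLt⟩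
            ⟨j.val - t, Nat.lt_of_le_of_lt (Nat.sub_le _ _) j.isLt⟩ = true}
        (L i j))
    (i : Fin m) (j : Fin n) (hi : 1 ≤ i.val) (hj : 1 ≤ j.val) (hM : M i j = true) :
    L i j =
      min (min (L ⟨i.val - 1, Nat.lt_of_le_of_lt (Nat.sub_le _ _) i.isLt⟩ j)
               (L i ⟨j.val - 1, Nat.lt_of_le_of_lt (Nat.sub_le _ _) j.isLt⟩))
          (L ⟨i.val - 1, Nat.lt_of_le_of_lt (Nat.sub_le _ _) i.isLt⟩
             ⟨j.val - 1, Nat.lt_of_le_of_lt (Nat.sub_le _ _) j.isLt⟩) + 1 := by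
  have hL' : ∀ (i : Fin m) (j : Fin n), IsGreatest {k | AllOnesSquare (gridCell M) i j k} (L i j) := fun i j => by
    rw [setOf_allOnesSquare_gridCell]
    exact hL i j
  exact isGreatest_allOnesSquare_recurrence (hL' _ _) (hL' _ _) (hL' _ _) (hL' _ _) hi hj
    ⟨i.isLt, j.isLt, hM⟩
end

section
/- There exists an all-ones square of side k in a binary matrix M if and only if there exists a row index i ≥ k-1 and column index j ≥ k-1 such that freq_i(j-t) ≥ k for all t < k, where freq_i(j) is the number of consecutive ones in column j ending at row i. -/
/-! The column run `freq i j` is at least `k` exactly when the `k` cells of column `j` ending at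
row `i` are all ones, because the set of admissible run lengths is downward closed. So the
condition on `freq i` says that the `k × k` block with bottom-right corner `(i, j)` is all ones,
which is an all-ones square read from its other corner. -/

def hasSquare {m n : ℕ} (M : Fin m → Fin n → Bool) (k : ℕ) : Prop :=
  ∃ i j : ℕ, ∃ (hi : i + k ≤ m) (hj : j + k ≤ n),
    ∀ s, ∀ _ : s < k, ∀ t, ∀ _ : t < k, M ⟨i + s, by omega⟩ ⟨j + t, by omega⟩ = true

theorem IsGreatest.le_iff_mem {α : Type*} [Preorder α] {S : Set α} {a b : α}
    (hS : IsLowerSet S) (h : IsGreatest S a) : b ≤ a ↔ b ∈ S :=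
  ⟨fun hb => hS hb h.1, fun hb => h.2 hb⟩

theorem le_runLength_iff {m n : ℕ} (M : Fin m → Fin n → Bool) (i : Fin m) (j : Fin n) {r k : ℕ}
    (hr : IsGreatest {l : ℕ | l ≤ i.val + 1 ∧
        ∀ t < l, M ⟨i.val - t, Nat.lt_of_le_of_lt (Nat.sub_le _ _) i.isLt⟩ j = true} r) :
    k ≤ r ↔ k ≤ i.val + 1 ∧
      ∀ t < k, M ⟨i.val - t, Nat.lt_of_le_of_lt (Nat.sub_le _ _) i.isLt⟩ j = true := by
  refine hr.le_iff_mem ?_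
  rintro l l' hl' ⟨hl, hM⟩
  exact ⟨hl'.trans hl, fun t ht => hM t (ht.trans_le hl')⟩

theorem hasSquare_iff_exists_bottomRight {m n : ℕ} (M : Fin m → Fin n → Bool) {k : ℕ}
    (hk : 1 ≤ k) :
    hasSquare M k ↔
      ∃ (i : Fin m) (j : Fin n), k - 1 ≤ i.val ∧ k - 1 ≤ j.val ∧
        ∀ t < k, ∀ s < k, M ⟨i.val - s, Nat.lt_of_le_of_lt (Nat.sub_le _ _) i.isLt⟩
          ⟨j.val - t, Nat.lt_of_le_of_lt (Nat.sub_le _ _) j.isLt⟩ = true := by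
  constructor
  · rintro ⟨i, j, hi, hj, hM⟩
    refine ⟨⟨i + k - 1, by omega⟩, ⟨j + k - 1, by omega⟩, by simp; omega, by simp; omega,
      fun t ht s hs => ?_⟩
    convert hM (k - 1 - s) (by omega) (k - 1 - t) (by omega) using 2 <;> ext <;> simp <;> omega
  · rintro ⟨i, j, hi, hj, hM⟩
    refine ⟨i.val - (k - 1), j.val - (k - 1), by omega, by omega, fun s hs t ht => ?_⟩
    convert hM (k - 1 - t) (by omega) (k - 1 - s) (by omega) using 2 <;> ext <;> simp <;> omega

theorem stmt9 {m n : ℕ} (M : Fin m → Fin n → Bool) (freq : Fin m → Fin n → ℕ)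
    (hfreq : ∀ (i : Fin m) (j : Fin n),
      IsGreatest {l : ℕ | l ≤ i.val + 1 ∧
        ∀ t < l, M ⟨i.val - t, Nat.lt_of_le_of_lt (Nat.sub_le _ _) i.isLt⟩ j = true}
        (freq i j))
    (k : ℕ) (hk : 1 ≤ k) :
    hasSquare M k ↔
      ∃ (i : Fin m) (j : Fin n), k - 1 ≤ i.val ∧ k - 1 ≤ j.val ∧
        ∀ t < k, k ≤ freq i ⟨j.val - t, Nat.lt_of_le_of_lt (Nat.sub_le _ _) j.isLt⟩ := by
  rw [hasSquare_iff_exists_bottomRight M hk]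
  refine exists₂_congr fun i j => and_congr_right fun hi => and_congr_right fun _ =>
    forall₂_congr fun t _ => ?_
  rw [le_runLength_iff M i _ (hfreq i _)]
  exact (and_iff_right (by omega)).symm
end

section
/- Suppose during a row-by-row, left-to-right scan the algorithm maintains thresholds w (check_max_width) and h (check_max_height) with w = h throughout, incrementing both each time a run of w consecutive columns with freq ≥ h is found. Then after each increment from w to w+1, the matrix provably contains an all-ones w × w square; hence the final value found_max_width is a lower bound on the true maximal square side. -/
structure AlgState where
  found : ℕ
  w : ℕ
  h : ℕ
  counter : ℕ

/-- Processing one cell `(i, j)` of the scan. -/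
def step {m n : ℕ} (M : Fin m → Fin n → Bool) (freq : Fin m → Fin n → ℕ)
    (i : Fin m) (j : Fin n) (s : AlgState) : AlgState :=
  if M i j = true ∧ s.h ≤ freq i j then
    if s.counter + 1 = s.w then ⟨s.found + 1, s.w + 1, s.h + 1, 0⟩
    else ⟨s.found, s.w, s.h, s.counter + 1⟩
  else ⟨s.found, s.w, s.h, 0⟩

/-- Row-by-row, left-to-right scan, resetting the counter at each row end,
starting from `(found, w, h, counter) = (0, 1, 1, 0)`. -/
def scan {m n : ℕ} (M : Fin m → Fin n → Bool) (freq : Fin m → Fin n → ℕ) : AlgState :=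
  (List.finRange m).foldl
    (fun s i =>
      let s' := (List.finRange n).foldl (fun s j => step M freq i j s) s
      ⟨s'.found, s'.w, s'.h, 0⟩)
    ⟨0, 1, 1, 0⟩

/-!
Throughout the scan `w = h = found + 1`, and `counter` is the number of columns immediately to
the left of the current position, in the current row `i`, whose run of ones ending at row `i`
has length at least `h`. When `counter` reaches `w`, these `w` columns each carry at least `w`
ones ending at row `i`, which is an all-ones `w × w` square. Hence `hasSquare M found` is
invariant.
-/

section SquareScan

variable {m n : ℕ} {M : Fin m → Fin n → Bool} {freq : Fin m → Fin n → ℕ}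

/-- Column `j` has at least `k` consecutive ones ending at row `i`. -/
def OnesAbove (M : Fin m → Fin n → Bool) (i : Fin m) (j : Fin n) (k : ℕ) : Prop :=
  k ≤ i.val + 1 ∧ ∀ t < k, M ⟨i.val - t, Nat.lt_of_le_of_lt (Nat.sub_le _ _) i.isLt⟩ j = true

lemma OnesAbove.mono {i : Fin m} {j : Fin n} {k k' : ℕ} (h : OnesAbove M i j k) (hk : k' ≤ k) :
    OnesAbove M i j k' :=
  ⟨hk.trans h.1, fun t ht => h.2 t (ht.trans_le hk)⟩

lemma hasSquare_zero (M : Fin m → Fin n → Bool) : hasSquare M 0 :=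
  ⟨0, 0, Nat.zero_le m, Nat.zero_le n, fun s hs => absurd hs (Nat.not_lt_zero s)⟩

lemma hasSquare_of_onesAbove (i : Fin m) {j₀ k : ℕ} (hj : j₀ + k ≤ n)
    (h : ∀ j : Fin n, j₀ ≤ j → j < j₀ + k → OnesAbove M i j k) : hasSquare M k := by
  rcases k.eq_zero_or_pos with rfl | hpos
  · exact hasSquare_zero M
  have hk : k ≤ i.val + 1 := (h ⟨j₀, by omega⟩ le_rfl (by simp only; omega)).1
  refine ⟨i.val + 1 - k, j₀, by omega, hj, fun s hs t ht => ?_⟩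
  have hone := (h ⟨j₀ + t, by omega⟩ (by simp only; omega) (by simp only; omega)).2
    (k - 1 - s) (by omega)
  convert hone using 2
  exact Fin.ext (by simp only; omega)

structure ScanInv (M : Fin m → Fin n → Bool) (s : AlgState) : Prop where
  w_eq : s.w = s.found + 1
  h_eq : s.h = s.found + 1
  square : hasSquare M s.found

def CounterRun (freq : Fin m → Fin n → ℕ) (i : Fin m) (p : ℕ) (s : AlgState) : Prop :=
  s.counter ≤ p ∧ ∀ j : Fin n, p - s.counter ≤ j → j < p → s.h ≤ freq i j

lemma counterRun_step {i : Fin m} {p : ℕ} (hp : p < n) {s : AlgState}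
    (hrun : CounterRun freq i p s) : CounterRun freq i (p + 1) (step M freq i ⟨p, hp⟩ s) := by
  obtain ⟨hle, hcols⟩ := hrun
  unfold step
  split_ifs with hcell hfull
  · exact ⟨Nat.zero_le _, fun j hj hj' => by simp only at hj; omega⟩
  · refine ⟨by simp only; omega, fun j hj hj' => ?_⟩
    rcases Nat.lt_succ_iff_lt_or_eq.mp hj' with hjp | hjp
    · exact hcols j (by simp only at hj; omega) hjp
    · rw [show j = ⟨p, hp⟩ from Fin.ext hjp]
      exact hcell.2
  · exact ⟨Nat.zero_le _, fun j hj hj' => by simp only at hj; omega⟩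

lemma scanInv_step (hcol : ∀ i j, OnesAbove M i j (freq i j)) {i : Fin m} {p : ℕ} (hp : p < n)
    {s : AlgState} (hs : ScanInv M s) (hrun : CounterRun freq i p s) :
    ScanInv M (step M freq i ⟨p, hp⟩ s) := by
  obtain ⟨hw, hh, hsq⟩ := hs
  obtain ⟨hle, hcols⟩ := hrun
  unfold step
  split_ifs with hcell hfull
  · refine ⟨by simp only; omega, by simp only; omega, ?_⟩
    show hasSquare M (s.found + 1)
    -- the `w` columns `p - found, …, p` complete a square with bottom-right corner `(i, p)`
    refine hasSquare_of_onesAbove i (j₀ := p - s.found) (by omega) fun j hj hj' => ?_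
    refine (hcol i j).mono ?_
    rcases Nat.lt_or_ge j.val p with hjp | hjp
    · exact hh ▸ hcols j (by omega) hjp
    · rw [show j = ⟨p, hp⟩ from Fin.ext (by simp only; omega)]
      exact hh ▸ hcell.2
  · exact ⟨hw, hh, hsq⟩
  · exact ⟨hw, hh, hsq⟩

lemma scanInv_foldl_take_finRange (hcol : ∀ i j, OnesAbove M i j (freq i j)) (i : Fin m)
    {s : AlgState} (hs : ScanInv M s) (hc : s.counter = 0) :
    ∀ p ≤ n, ScanInv M (((List.finRange n).take p).foldl (fun s j => step M freq i j s) s) ∧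
      CounterRun freq i p (((List.finRange n).take p).foldl (fun s j => step M freq i j s) s)
  | 0, _ => ⟨hs, hc.le, fun j hj hj' => absurd hj' (Nat.not_lt_zero _)⟩
  | p + 1, hp => by
    obtain ⟨hs', hrun⟩ := scanInv_foldl_take_finRange hcol i hs hc p (by omega)
    have htake : (List.finRange n).take (p + 1) = (List.finRange n).take p ++ [⟨p, by omega⟩] := by
      rw [List.take_add_one, List.getElem?_eq_getElem (by simpa using hp), List.getElem_finRange]
      rfl
    rw [htake, List.foldl_append]
    exact ⟨scanInv_step hcol (by omega) hs' hrun, counterRun_step (by omega) hrun⟩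

def scanRow (M : Fin m → Fin n → Bool) (freq : Fin m → Fin n → ℕ) (s : AlgState) (i : Fin m) :
    AlgState :=
  let s' := (List.finRange n).foldl (fun s j => step M freq i j s) s
  ⟨s'.found, s'.w, s'.h, 0⟩

lemma scanInv_scanRow (hcol : ∀ i j, OnesAbove M i j (freq i j)) (i : Fin m) {s : AlgState}
    (hs : ScanInv M s) (hc : s.counter = 0) : ScanInv M (scanRow M freq s i) := by
  have hrow := (scanInv_foldl_take_finRange hcol i hs hc n le_rfl).1
  rw [List.take_of_length_le (by simp)] at hrow
  exact ⟨hrow.w_eq, hrow.h_eq, hrow.square⟩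

lemma scanInv_foldl_scanRow (hcol : ∀ i j, OnesAbove M i j (freq i j)) :
    ∀ (L : List (Fin m)) {s : AlgState}, ScanInv M s → s.counter = 0 →
      ScanInv M (L.foldl (scanRow M freq) s)
  | [], _, hs, _ => hs
  | i :: L, _, hs, hc => scanInv_foldl_scanRow hcol L (scanInv_scanRow hcol i hs hc) rfl

lemma hasSquare_scan_found (hcol : ∀ i j, OnesAbove M i j (freq i j)) :
    hasSquare M (scan M freq).found :=
  (scanInv_foldl_scanRow hcol (List.finRange m) ⟨rfl, rfl, hasSquare_zero M⟩ rfl).square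

end SquareScan

theorem stmt13 {m n : ℕ} (M : Fin m → Fin n → Bool) (freq : Fin m → Fin n → ℕ)
    (hfreq : ∀ (i : Fin m) (j : Fin n),
      IsGreatest {l : ℕ | l ≤ i.val + 1 ∧
        ∀ t < l, M ⟨i.val - t, Nat.lt_of_le_of_lt (Nat.sub_le _ _) i.isLt⟩ j = true}
        (freq i j)) :
    hasSquare M (scan M freq).found ∧
    ∀ K, IsGreatest {k | hasSquare M k} K → (scan M freq).found ≤ K := by
  have hsq : hasSquare M (scan M freq).found := hasSquare_scan_found fun i j => (hfreq i j).1
  exact ⟨hsq, fun K hK => hK.2 hsq⟩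
end
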